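/- Roman's Identity: for all distinct integers n and k, ⌊n choose k⌉·⌊k choose n⌉ = (-1)^(n+k+1)/|n-k| (sign checked against the definitions, e.g. n = 1, k = 0 gives ⌊1 choose 0⌉·⌊0 choose 1⌉ = 1 = (-1)^2/1). -/

import Mathlib

/-!
The product of the two coefficients collapses to `1 / (⌊n - k⌉! ⌊k - n⌉!)`, so everything
reduces to the reflection formula `⌊m⌉! ⌊-m⌉! = (-1)^(m+1) |m|` for `m ≠ 0`. For `m = j + 1`
this is `(j + 1)! · (-1)^j / j!`, and the case `m < 0` is the same product read backwards.
-/

/-- Roman factorial of an integer, as a rational number. -/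
def romanFactorial (n : ℤ) : ℚ :=
  if 0 ≤ n then (n.toNat.factorial : ℚ)
  else (-1 : ℚ) ^ (n + 1) / ((-n - 1).toNat.factorial : ℚ)

/-- Roman coefficient of two integers. -/
def romanCoeff (n k : ℤ) : ℚ :=
  romanFactorial n / (romanFactorial k * romanFactorial (n - k))

open Nat

theorem neg_one_zpow_eq_of_even_sub {K : Type*} [DivisionRing K] {a b : ℤ} (h : Even (a - b)) :
    (-1 : K) ^ a = (-1 : K) ^ b := by
  rw [← Int.cast_negOnePow, ← Int.cast_negOnePow, (Int.negOnePow_eq_iff a b).mpr h]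

theorem romanFactorial_natCast (j : ℕ) : romanFactorial j = j ! := by
  simp [romanFactorial]

theorem romanFactorial_neg_natCast_succ (j : ℕ) :
    romanFactorial (-(j + 1)) = (-1 : ℚ) ^ j / j ! := by
  rw [romanFactorial, if_neg (by omega), show -(-((j : ℤ) + 1)) - 1 = j by ring, Int.toNat_natCast,
    neg_one_zpow_eq_of_even_sub (b := j) (by simp [Int.even_sub, parity_simps]), zpow_natCast]

theorem romanFactorial_ne_zero (n : ℤ) : romanFactorial n ≠ 0 := by
  unfold romanFactorial
  split_ifs <;> positivity

theorem romanFactorial_mul_romanFactorial_neg {m : ℤ} (hm : m ≠ 0) :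
    romanFactorial m * romanFactorial (-m) = (-1 : ℚ) ^ (m + 1) * |(m : ℚ)| := by
  have succ_case (j : ℕ) : romanFactorial (j + 1) * romanFactorial (-(j + 1)) =
      (-1 : ℚ) ^ ((j + 1 : ℤ) + 1) * |((j + 1 : ℤ) : ℚ)| := by
    rw [romanFactorial_neg_natCast_succ, ← Nat.cast_succ, romanFactorial_natCast,
      neg_one_zpow_eq_of_even_sub (b := j) (by simp [Int.even_sub, parity_simps]), zpow_natCast,
      factorial_succ]
    push_cast
    rw [abs_of_nonneg (by positivity)]
    field_simp
  obtain ⟨j, rfl | rfl⟩ : ∃ j : ℕ, m = j + 1 ∨ m = -(j + 1) := ⟨m.natAbs - 1, by omega⟩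
  · exact succ_case j
  · rw [neg_neg, mul_comm, Int.cast_neg, abs_neg,
      neg_one_zpow_eq_of_even_sub (b := (j + 1 : ℤ) + 1) (by simp [Int.even_sub, parity_simps])]
    exact succ_case j

theorem romanCoeff_mul_romanCoeff_swap (n k : ℤ) :
    romanCoeff n k * romanCoeff k n = (romanFactorial (n - k) * romanFactorial (k - n))⁻¹ := by
  unfold romanCoeff
  field_simp [romanFactorial_ne_zero]

/-- Roman's identity: for distinct integers `n` and `k`,
`⌊n choose k⌉ ⌊k choose n⌉ = (-1)^(n+k+1) / |n-k|`. -/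
theorem romanCoeff_roman_identity (n k : ℤ) (h : n ≠ k) :
    romanCoeff n k * romanCoeff k n = (-1 : ℚ) ^ (n + k + 1) / (|n - k| : ℚ) := by
  rw [romanCoeff_mul_romanCoeff_swap, ← neg_sub n k,
    romanFactorial_mul_romanFactorial_neg (sub_ne_zero.mpr h), mul_inv, ← zpow_neg,
    neg_one_zpow_eq_of_even_sub (b := n + k + 1) ⟨-n - 1, by ring⟩, Int.cast_sub, div_eq_mul_inv]
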